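/- arXiv:1803.01425 — 7 statements merged into one kernel-verified Lean document; each statement's English description precedes it below -/
import Mathlib

section
/- For a bit string x of length n with LeadingOnes value L = Lo(x) < n, if an offspring y is created by flipping exactly ℓ distinct positions of x chosen uniformly at random (1 ≤ ℓ ≤ n - L), then the probability that Lo(y) > Lo(x) equals C(n-L-1, ℓ-1) / C(n, ℓ). -/
/-- Number of leading ones of the first `n` bits of `x`. -/
def lo (n : ℕ) (x : ℕ → Bool) : ℕ :=
  ((Finset.range n).filter (fun i => ∀ j ≤ i, x j = true)).card

/-- Flip the bits of `x` at the positions in `S`. -/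
def flipS (S : Finset ℕ) (x : ℕ → Bool) : ℕ → Bool :=
  fun i => if i ∈ S then !(x i) else x i

/-!
Since `x` has exactly `L = lo n x` leading ones followed by a zero, `flipS S x` has more leading
ones iff `S` contains position `L` and none of the positions below it, i.e. iff `S` is an
`ℓ`-subset of `[L, n)` containing `L`. There are `C(n - L - 1, ℓ - 1)` of these.
-/

open Finset

section LeadingOnes

variable {n : ℕ} {x : ℕ → Bool}

lemma lt_lo_iff {i : ℕ} (hi : i < n) : i < lo n x ↔ ∀ j ≤ i, x j = true := by
  constructor
  · intro hlt
    by_contra hi'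
    have hsub : (range n).filter (fun i => ∀ j ≤ i, x j = true) ⊆ range i := by
      intro k hk
      rw [mem_filter] at hk
      rw [mem_range]
      by_contra! hik
      exact hi' fun j hj => hk.2 j (hj.trans hik)
    have hle : lo n x ≤ i := by simpa [lo] using card_le_card hsub
    exact absurd hlt (not_lt.mpr hle)
  · intro h
    have hsub : range (i + 1) ⊆ (range n).filter (fun i => ∀ j ≤ i, x j = true) := by
      intro k hk
      rw [mem_range, Nat.lt_succ_iff] at hk
      exact mem_filter.mpr ⟨mem_range.mpr (hk.trans_lt hi), fun j hj => h j (hj.trans hk)⟩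
    simpa [lo] using card_le_card hsub

lemma lo_le : lo n x ≤ n :=
  (card_filter_le _ _).trans_eq (card_range n)

lemma apply_eq_true_of_lt_lo {j : ℕ} (hj : j < lo n x) : x j = true :=
  (lt_lo_iff (hj.trans_le lo_le)).mp hj j le_rfl

lemma apply_lo_eq_false (hL : lo n x < n) : x (lo n x) = false := by
  by_contra h
  refine lt_irrefl (lo n x) ((lt_lo_iff hL).mpr fun j hj => ?_)
  rcases hj.lt_or_eq with hj | rfl
  · exact apply_eq_true_of_lt_lo hj
  · simpa using h

lemma lo_lt_lo_flipS_iff (hL : lo n x < n) (S : Finset ℕ) :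
    lo n x < lo n (flipS S x) ↔ lo n x ∈ S ∧ ∀ j < lo n x, j ∉ S := by
  rw [lt_lo_iff hL]
  constructor
  · intro h
    refine ⟨?_, fun j hj hjS => ?_⟩
    · by_contra hLS
      simpa [flipS, hLS, apply_lo_eq_false hL] using h _ le_rfl
    · simpa [flipS, hjS, apply_eq_true_of_lt_lo hj] using h j hj.le
  · rintro ⟨hLS, hS⟩ j hj
    rcases hj.lt_or_eq with hj | rfl
    · simp [flipS, hS j hj, apply_eq_true_of_lt_lo hj]
    · simp [flipS, hLS, apply_lo_eq_false hL]

lemma filter_powersetCard_lo_lt_lo_flipS (hL : lo n x < n) (ℓ : ℕ) :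
    ((range n).powersetCard ℓ).filter (fun S => lo n x < lo n (flipS S x)) =
      ((Ico (lo n x) n).powersetCard ℓ).filter ({lo n x} ⊆ ·) := by
  ext S
  simp only [mem_filter, mem_powersetCard, lo_lt_lo_flipS_iff hL, singleton_subset_iff]
  have hIco : S ⊆ range n ∧ (∀ j < lo n x, j ∉ S) ↔ S ⊆ Ico (lo n x) n := by
    simp only [subset_iff, mem_range, mem_Ico]
    exact ⟨fun h j hj => ⟨not_lt.mp fun hlt => h.2 j hlt hj, h.1 hj⟩,
      fun h => ⟨fun _ hj => (h hj).2, fun j hlt hj => absurd (h hj).1 (not_le.mpr hlt)⟩⟩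
  rw [← hIco]
  tauto

end LeadingOnes

theorem stmt0_general (n ℓ : ℕ) (x : ℕ → Bool) (hL : lo n x < n)
    (h1 : 1 ≤ ℓ) :
    ((((Finset.range n).powersetCard ℓ).filter
        (fun S => lo n x < lo n (flipS S x))).card : ℝ) / (n.choose ℓ : ℝ)
      = ((n - lo n x - 1).choose (ℓ - 1) : ℝ) / (n.choose ℓ : ℝ) := by
  rw [filter_powersetCard_lo_lt_lo_flipS hL,
    card_filter_powersetCard_subset _ _ _ (by simpa using hL) (by simpa using h1),
    Nat.card_Ico, card_singleton]

theorem stmt0 (n ℓ : ℕ) (x : ℕ → Bool) (hL : lo n x < n)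
    (h1 : 1 ≤ ℓ) (h2 : ℓ ≤ n - lo n x) :
    ((((Finset.range n).powersetCard ℓ).filter
        (fun S => lo n x < lo n (flipS S x))).card : ℝ) / (n.choose ℓ : ℝ)
      = ((n - lo n x - 1).choose (ℓ - 1) : ℝ) / (n.choose ℓ : ℝ) :=
  stmt0_general n ℓ x hL h1
end

section
/- For all n ≥ 1 and all L with 0 ≤ L < n, the value ℓ ∈ {1, ..., n-L} maximizing C(n-L-1, ℓ-1) / C(n, ℓ) is ℓ = ⌊n/(L+1)⌋. That is, for every ℓ with 1 ≤ ℓ ≤ n-L, C(n-L-1, ℓ-1)/C(n,ℓ) ≤ C(n-L-1, k-1)/C(n,k) where k = ⌊n/(L+1)⌋. -/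
private lemma aux_eq1 (n L j : ℕ) :
    (n - L - 1).choose j * n.choose (j + 2) * ((j + 1) * (j + 2))
      = (n - L - 1).choose j * n.choose (j + 1) * ((j + 1) * (n - (j + 1))) := by
  have e1 : n.choose (j + 2) * (j + 2) = n.choose (j + 1) * (n - (j + 1)) :=
    Nat.choose_succ_right_eq n (j + 1)
  calc (n - L - 1).choose j * n.choose (j + 2) * ((j + 1) * (j + 2))
      = (n - L - 1).choose j * (j + 1) * (n.choose (j + 2) * (j + 2)) := by ring
    _ = (n - L - 1).choose j * (j + 1) * (n.choose (j + 1) * (n - (j + 1))) := by rw [e1]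
    _ = (n - L - 1).choose j * n.choose (j + 1) * ((j + 1) * (n - (j + 1))) := by ring

private lemma aux_eq2 (n L j : ℕ) :
    (n - L - 1).choose (j + 1) * n.choose (j + 1) * ((j + 1) * (j + 2))
      = (n - L - 1).choose j * n.choose (j + 1) * ((n - L - 1 - j) * (j + 2)) := by
  have e2 : (n - L - 1).choose (j + 1) * (j + 1) = (n - L - 1).choose j * (n - L - 1 - j) :=
    Nat.choose_succ_right_eq (n - L - 1) j
  calc (n - L - 1).choose (j + 1) * n.choose (j + 1) * ((j + 1) * (j + 2))
      = ((n - L - 1).choose (j + 1) * (j + 1)) * (n.choose (j + 1) * (j + 2)) := by ring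
    _ = ((n - L - 1).choose j * (n - L - 1 - j)) * (n.choose (j + 1) * (j + 2)) := by rw [e2]
    _ = (n - L - 1).choose j * n.choose (j + 1) * ((n - L - 1 - j) * (j + 2)) := by ring

private lemma key_up (n L j : ℕ) (h2 : j + 2 ≤ n - L) (hc : (L + 1) * (j + 2) ≤ n + 1) :
    (j + 1) * (n - (j + 1)) ≤ (n - L - 1 - j) * (j + 2) := by
  have hL : L + 2 ≤ n := by omega
  have hj : j + 1 ≤ n := by omega
  have hj2 : j + L + 1 ≤ n := by omega
  zify [hj, show L ≤ n by omega, show 1 ≤ n - L by omega, show j ≤ n - L - 1 by omega]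
  nlinarith

private lemma key_down (n L j : ℕ) (h2 : j + 2 ≤ n - L) (hc : n + 1 ≤ (L + 1) * (j + 2)) :
    (n - L - 1 - j) * (j + 2) ≤ (j + 1) * (n - (j + 1)) := by
  have hL : L + 2 ≤ n := by omega
  have hj : j + 1 ≤ n := by omega
  zify [hj, show L ≤ n by omega, show 1 ≤ n - L by omega, show j ≤ n - L - 1 by omega]
  nlinarith

private lemma step_up (n L j : ℕ) (h2 : j + 2 ≤ n - L) (hc : (L + 1) * (j + 2) ≤ n + 1) :
    ((n - L - 1).choose j : ℝ) / (n.choose (j + 1) : ℝ)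
      ≤ ((n - L - 1).choose (j + 1) : ℝ) / (n.choose (j + 2) : ℝ) := by
  have hp1 : 0 < n.choose (j + 1) := Nat.choose_pos (by omega)
  have hp2 : 0 < n.choose (j + 2) := Nat.choose_pos (by omega)
  rw [div_le_div_iff₀ (by exact_mod_cast hp1) (by exact_mod_cast hp2)]
  have key := key_up n L j h2 hc
  have hmul := Nat.mul_le_mul_left ((n - L - 1).choose j * n.choose (j + 1)) key
  have : (n - L - 1).choose j * n.choose (j + 2) * ((j + 1) * (j + 2))
      ≤ (n - L - 1).choose (j + 1) * n.choose (j + 1) * ((j + 1) * (j + 2)) := by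
    rw [aux_eq1, aux_eq2]; exact hmul
  have hnat : (n - L - 1).choose j * n.choose (j + 2)
      ≤ (n - L - 1).choose (j + 1) * n.choose (j + 1) :=
    Nat.le_of_mul_le_mul_right this (by positivity)
  exact_mod_cast hnat

private lemma step_down (n L j : ℕ) (h2 : j + 2 ≤ n - L) (hc : n + 1 ≤ (L + 1) * (j + 2)) :
    ((n - L - 1).choose (j + 1) : ℝ) / (n.choose (j + 2) : ℝ)
      ≤ ((n - L - 1).choose j : ℝ) / (n.choose (j + 1) : ℝ) := by
  have hp1 : 0 < n.choose (j + 1) := Nat.choose_pos (by omega)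
  have hp2 : 0 < n.choose (j + 2) := Nat.choose_pos (by omega)
  rw [div_le_div_iff₀ (by exact_mod_cast hp2) (by exact_mod_cast hp1)]
  have key := key_down n L j h2 hc
  have hmul := Nat.mul_le_mul_left ((n - L - 1).choose j * n.choose (j + 1)) key
  have : (n - L - 1).choose (j + 1) * n.choose (j + 1) * ((j + 1) * (j + 2))
      ≤ (n - L - 1).choose j * n.choose (j + 2) * ((j + 1) * (j + 2)) := by
    rw [aux_eq1, aux_eq2]; exact hmul
  have hnat : (n - L - 1).choose (j + 1) * n.choose (j + 1)
      ≤ (n - L - 1).choose j * n.choose (j + 2) :=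
    Nat.le_of_mul_le_mul_right this (by positivity)
  exact_mod_cast hnat

private lemma mono_up (n L : ℕ) (a : ℕ) (ha : 1 ≤ a) :
    ∀ b, a ≤ b → b ≤ n / (L + 1) → b ≤ n - L →
    ((n - L - 1).choose (a - 1) : ℝ) / (n.choose a : ℝ)
      ≤ ((n - L - 1).choose (b - 1) : ℝ) / (n.choose b : ℝ) := by
  intro b
  induction b with
  | zero => intro hab _ _; interval_cases a <;> simp
  | succ b ih =>
    intro hab hbk hbn
    rcases Nat.lt_or_ge a (b + 1) with hlt | hge
    · -- a ≤ b, use ih then a step from b to b+1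
      have hb1 : 1 ≤ b := by omega
      obtain ⟨j, rfl⟩ : ∃ j, b = j + 1 := ⟨b - 1, by omega⟩
      have hstep : ((n - L - 1).choose j : ℝ) / (n.choose (j + 1) : ℝ)
          ≤ ((n - L - 1).choose (j + 1) : ℝ) / (n.choose (j + 2) : ℝ) := by
        apply step_up n L j (by omega)
        have h := Nat.div_mul_le_self n (L + 1)
        calc (L + 1) * (j + 2) ≤ (L + 1) * (n / (L + 1)) := by
              exact Nat.mul_le_mul_left _ (by omega)
          _ = n / (L + 1) * (L + 1) := by ring
          _ ≤ n := h
          _ ≤ n + 1 := by omega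
      have := ih (by omega) (by omega) (by omega)
      simpa using this.trans hstep
    · have : a = b + 1 := by omega
      subst this
      exact le_refl _

private lemma mono_down (n L : ℕ) (a : ℕ) (ha : 1 ≤ a) (hak : n / (L + 1) ≤ a) :
    ∀ b, a ≤ b → b ≤ n - L →
    ((n - L - 1).choose (b - 1) : ℝ) / (n.choose b : ℝ)
      ≤ ((n - L - 1).choose (a - 1) : ℝ) / (n.choose a : ℝ) := by
  intro b
  induction b with
  | zero => intro hab _; omega
  | succ b ih =>
    intro hab hbn
    rcases Nat.lt_or_ge a (b + 1) with hlt | hge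
    · have hb1 : 1 ≤ b := by omega
      obtain ⟨j, rfl⟩ : ∃ j, b = j + 1 := ⟨b - 1, by omega⟩
      have hstep : ((n - L - 1).choose (j + 1) : ℝ) / (n.choose (j + 2) : ℝ)
          ≤ ((n - L - 1).choose j : ℝ) / (n.choose (j + 1) : ℝ) := by
        apply step_down n L j (by omega)
        have hd := Nat.div_add_mod n (L + 1)
        have hm := Nat.mod_lt n (show 0 < L + 1 by omega)
        have h2 : (L + 1) * (n / (L + 1)) ≤ (L + 1) * (j + 1) :=
          Nat.mul_le_mul_left _ (by omega)
        nlinarith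
      have := ih (by omega) (by omega)
      refine le_trans ?_ this
      simpa using hstep
    · have : a = b + 1 := by omega
      subst this
      exact le_refl _

theorem stmt2 (n L : ℕ) (hn : 1 ≤ n) (hL : L < n) (ℓ : ℕ) (h1 : 1 ≤ ℓ) (h2 : ℓ ≤ n - L) :
    ((n - L - 1).choose (ℓ - 1) : ℝ) / (n.choose ℓ : ℝ)
      ≤ ((n - L - 1).choose (n / (L + 1) - 1) : ℝ) / (n.choose (n / (L + 1)) : ℝ) := by
  set k := n / (L + 1) with hk
  have hk1 : 1 ≤ k := by
    rw [hk]
    exact Nat.one_le_div_iff (by omega) |>.mpr (by omega)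
  have hkmul : k * (L + 1) ≤ n := Nat.div_mul_le_self n (L + 1)
  have hk2 : k ≤ n - L := by
    have h5 : k + L ≤ k * (L + 1) := by nlinarith [hk1]
    omega
  rcases le_or_gt ℓ k with hle | hgt
  · exact mono_up n L ℓ h1 k hle le_rfl hk2
  · exact mono_down n L k hk1 le_rfl ℓ (by omega) h2
end

section
/- Let n ≥ 1 and 0 ≤ L < n, and define p(ℓ) = C(n-L-1, ℓ-1)/C(n,ℓ) for integers 1 ≤ ℓ ≤ n-L. Then p(ℓ) is unimodal in ℓ: p is nondecreasing for ℓ ≤ ⌊n/(L+1)⌋ and nonincreasing for ℓ ≥ ⌊n/(L+1)⌋. -/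
lemma aux_le (m n k : ℕ) (h : (n - (k+1)) * (k+1) ≤ (m - k) * (k+2)) :
    m.choose k * n.choose (k+2) ≤ m.choose (k+1) * n.choose (k+1) := by
  have h1 : m.choose (k+1) * (k+1) = m.choose k * (m - k) := Nat.choose_succ_right_eq m k
  have h2 : n.choose (k+2) * (k+2) = n.choose (k+1) * (n - (k+1)) := Nat.choose_succ_right_eq n (k+1)
  have key : (m.choose k * n.choose (k+2)) * ((k+1)*(k+2))
      ≤ (m.choose (k+1) * n.choose (k+1)) * ((k+1)*(k+2)) := by
    calc (m.choose k * n.choose (k+2)) * ((k+1)*(k+2))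
        = (m.choose k * (k+1)) * (n.choose (k+2) * (k+2)) := by ring
      _ = (m.choose k * (k+1)) * (n.choose (k+1) * (n - (k+1))) := by rw [h2]
      _ = (m.choose k * n.choose (k+1)) * ((n - (k+1)) * (k+1)) := by ring
      _ ≤ (m.choose k * n.choose (k+1)) * ((m - k) * (k+2)) := Nat.mul_le_mul_left _ h
      _ = (m.choose k * (m - k)) * (n.choose (k+1) * (k+2)) := by ring
      _ = (m.choose (k+1) * (k+1)) * (n.choose (k+1) * (k+2)) := by rw [h1]
      _ = (m.choose (k+1) * n.choose (k+1)) * ((k+1)*(k+2)) := by ring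
  exact Nat.le_of_mul_le_mul_right key (by positivity)

lemma aux_ge (m n k : ℕ) (h : (m - k) * (k+2) ≤ (n - (k+1)) * (k+1)) :
    m.choose (k+1) * n.choose (k+1) ≤ m.choose k * n.choose (k+2) := by
  have h1 : m.choose (k+1) * (k+1) = m.choose k * (m - k) := Nat.choose_succ_right_eq m k
  have h2 : n.choose (k+2) * (k+2) = n.choose (k+1) * (n - (k+1)) := Nat.choose_succ_right_eq n (k+1)
  have key : (m.choose (k+1) * n.choose (k+1)) * ((k+1)*(k+2))
      ≤ (m.choose k * n.choose (k+2)) * ((k+1)*(k+2)) := by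
    calc (m.choose (k+1) * n.choose (k+1)) * ((k+1)*(k+2))
        = (m.choose (k+1) * (k+1)) * (n.choose (k+1) * (k+2)) := by ring
      _ = (m.choose k * (m - k)) * (n.choose (k+1) * (k+2)) := by rw [h1]
      _ = (m.choose k * n.choose (k+1)) * ((m - k) * (k+2)) := by ring
      _ ≤ (m.choose k * n.choose (k+1)) * ((n - (k+1)) * (k+1)) := Nat.mul_le_mul_left _ h
      _ = (m.choose k * (k+1)) * (n.choose (k+1) * (n - (k+1))) := by ring
      _ = (m.choose k * (k+1)) * (n.choose (k+2) * (k+2)) := by rw [h2]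
      _ = (m.choose k * n.choose (k+2)) * ((k+1)*(k+2)) := by ring
  exact Nat.le_of_mul_le_mul_right key (by positivity)

/-- Unimodality of `p(ℓ) = C(n-L-1,ℓ-1)/C(n,ℓ)`: nondecreasing up to `⌊n/(L+1)⌋`
and nonincreasing thereafter. -/
theorem stmt4 (n L : ℕ) (hn : 1 ≤ n) (hL : L < n) :
    (∀ ℓ : ℕ, 1 ≤ ℓ → ℓ + 1 ≤ n / (L + 1) →
      ((n - L - 1).choose (ℓ - 1) : ℝ) / (n.choose ℓ : ℝ)
        ≤ ((n - L - 1).choose ((ℓ + 1) - 1) : ℝ) / (n.choose (ℓ + 1) : ℝ)) ∧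
    (∀ ℓ : ℕ, n / (L + 1) ≤ ℓ → ℓ + 1 ≤ n - L →
      ((n - L - 1).choose ((ℓ + 1) - 1) : ℝ) / (n.choose (ℓ + 1) : ℝ)
        ≤ ((n - L - 1).choose (ℓ - 1) : ℝ) / (n.choose ℓ : ℝ)) := by
  constructor
  · intro ℓ hℓ hdiv
    obtain ⟨k, rfl⟩ := Nat.exists_eq_add_of_le' hℓ
    -- ℓ = k + 1
    have hmul : (k + 2) * (L + 1) ≤ n :=
      (Nat.le_div_iff_mul_le (Nat.succ_pos L)).mp hdiv
    have hlk : L + k + 2 ≤ n := by nlinarith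
    have hle : k + 2 ≤ n := by omega
    have hc1 : (0:ℝ) < (n.choose (k+1) : ℝ) := by
      exact_mod_cast Nat.choose_pos (by omega)
    have hc2 : (0:ℝ) < (n.choose (k+2) : ℝ) := by
      exact_mod_cast Nat.choose_pos hle
    simp only [Nat.add_sub_cancel]
    rw [div_le_div_iff₀ hc1 hc2]
    have key : (n - L - 1).choose k * n.choose (k+2)
        ≤ (n - L - 1).choose (k+1) * n.choose (k+1) := by
      apply aux_le
      set a := n - L - 1 - k with ha
      have h1 : n - (k+1) = a + L := by omega
      have hn' : n = a + L + k + 1 := by omega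
      rw [h1]
      have haL : L * (k+1) ≤ a := by nlinarith [hmul, hn']
      nlinarith
    calc ((n - L - 1).choose k : ℝ) * (n.choose (k+2) : ℝ)
        = (((n - L - 1).choose k * n.choose (k+2) : ℕ) : ℝ) := by push_cast; ring
      _ ≤ (((n - L - 1).choose (k+1) * n.choose (k+1) : ℕ) : ℝ) := by exact_mod_cast key
      _ = ((n - L - 1).choose (k+1) : ℝ) * (n.choose (k+1) : ℝ) := by push_cast; ring
  · intro ℓ hdiv hℓ
    have hℓ1 : 1 ≤ ℓ := by
      rcases Nat.eq_zero_or_pos ℓ with h | h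
      · subst h
        have : 1 ≤ n / (L+1) := Nat.one_le_div_iff (Nat.succ_pos L) |>.mpr (by omega)
        omega
      · exact h
    obtain ⟨k, rfl⟩ := Nat.exists_eq_add_of_le' hℓ1
    have hmul : n < (k + 2) * (L + 1) := by
      have : n / (L+1) < k + 2 := by omega
      exact (Nat.div_lt_iff_lt_mul (Nat.succ_pos L)).mp this
    have hlk : L + k + 2 ≤ n := by omega
    have hle : k + 2 ≤ n := by omega
    have hc1 : (0:ℝ) < (n.choose (k+1) : ℝ) := by
      exact_mod_cast Nat.choose_pos (by omega)
    have hc2 : (0:ℝ) < (n.choose (k+2) : ℝ) := by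
      exact_mod_cast Nat.choose_pos hle
    simp only [Nat.add_sub_cancel]
    rw [div_le_div_iff₀ hc2 hc1]
    have key : (n - L - 1).choose (k+1) * n.choose (k+1)
        ≤ (n - L - 1).choose k * n.choose (k+2) := by
      apply aux_ge
      set a := n - L - 1 - k with ha
      have h1 : n - (k+1) = a + L := by omega
      have hn' : n = a + L + k + 1 := by omega
      rw [h1]
      have haL : a ≤ L * (k+1) := by nlinarith [hmul, hn']
      nlinarith
    calc ((n - L - 1).choose (k+1) : ℝ) * (n.choose (k+1) : ℝ)
        = (((n - L - 1).choose (k+1) * n.choose (k+1) : ℕ) : ℝ) := by push_cast; ring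
      _ ≤ (((n - L - 1).choose k * n.choose (k+2) : ℕ) : ℝ) := by exact_mod_cast key
      _ = ((n - L - 1).choose k : ℝ) * (n.choose (k+2) : ℝ) := by push_cast; ring
end

section
/- For any n-bit string x with OneMax value m = Om(x), the expected positive fitness gain of flipping ℓ uniformly random distinct bits, E[max{Om(mut_ℓ(x)) - Om(x), 0}], equals the sum over i from ⌈ℓ/2⌉ to ℓ of C(n-m, i)·C(m, ℓ-i)·(2i-ℓ)/C(n, ℓ). -/
/-! Flipping a set `S` of positions turns its zero-bits into ones and its one-bits into zeros,
so the OneMax value changes by `#(zeros of x in S) - #(ones of x in S)`. Grouping the `ℓ`-sets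
`S` by the number `i` of zero-bits they hit gives `C(n - m, i) * C(m, ℓ - i)` sets with gain
`2i - ℓ`, and the positive part of that gain vanishes for `i < ⌈ℓ/2⌉`. -/

/-- Number of ones among the first `n` bits of `x`. -/
def om (n : ℕ) (x : ℕ → Bool) : ℕ :=
  ((Finset.range n).filter (fun i => x i = true)).card

open Finset

section CountingByPredicate

variable {α : Type*} [DecidableEq α] (p : α → Prop) [DecidablePred p]

lemma filter_union_eq_left_of_forall {A B : Finset α} (hA : ∀ a ∈ A, p a)
    (hB : ∀ b ∈ B, ¬ p b) :
    {a ∈ A ∪ B | p a} = A := by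
  rw [filter_union, filter_true_of_mem hA, filter_false_of_mem hB, union_empty]

theorem card_filter_powersetCard_card_filter_eq (U : Finset α) {ℓ i : ℕ} (hi : i ≤ ℓ) :
    #{S ∈ U.powersetCard ℓ | #{a ∈ S | p a} = i}
      = (#{a ∈ U | p a}).choose i * (#{a ∈ U | ¬ p a}).choose (ℓ - i) := by
  rw [← card_powersetCard, ← card_powersetCard, ← card_product]
  refine card_bij' (fun S _ => ({a ∈ S | p a}, {a ∈ S | ¬ p a})) (fun AB _ => AB.1 ∪ AB.2)
    ?_ ?_ ?_ ?_
  · intro S hS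
    obtain ⟨hS, hSi⟩ := mem_filter.1 hS
    obtain ⟨hSU, hSℓ⟩ := mem_powersetCard.1 hS
    have hsplit := card_filter_add_card_filter_not (s := S) (p ·)
    simp only [mem_product, mem_powersetCard]
    exact ⟨⟨filter_subset_filter _ hSU, hSi⟩, filter_subset_filter _ hSU, by omega⟩
  · rintro ⟨A, B⟩ hAB
    simp only [mem_product, mem_powersetCard] at hAB
    obtain ⟨⟨hAU, hA⟩, hBU, hB⟩ := hAB
    have hAp : ∀ a ∈ A, p a := fun a ha => (mem_filter.1 (hAU ha)).2
    have hBp : ∀ b ∈ B, ¬ p b := fun b hb => (mem_filter.1 (hBU hb)).2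
    have hdisj : Disjoint A B := disjoint_left.2 fun a ha hb => hBp a hb (hAp a ha)
    simp only [mem_filter, mem_powersetCard]
    refine ⟨⟨union_subset (hAU.trans (filter_subset ..)) (hBU.trans (filter_subset ..)), ?_⟩, ?_⟩
    · rw [card_union_of_disjoint hdisj, hA, hB]; omega
    · rw [filter_union_eq_left_of_forall p hAp hBp, hA]
  · intro S _
    exact filter_union_filter_not_eq p S
  · rintro ⟨A, B⟩ hAB
    simp only [mem_product, mem_powersetCard] at hAB
    obtain ⟨⟨hAU, -⟩, hBU, -⟩ := hAB
    have hAp : ∀ a ∈ A, p a := fun a ha => (mem_filter.1 (hAU ha)).2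
    have hBp : ∀ b ∈ B, ¬ p b := fun b hb => (mem_filter.1 (hBU hb)).2
    have hBA : {a ∈ B ∪ A | ¬ p a} = B :=
      filter_union_eq_left_of_forall (¬ p ·) hBp (by simpa using hAp)
    simp only [Prod.mk.injEq]
    exact ⟨filter_union_eq_left_of_forall p hAp hBp, by rwa [union_comm]⟩

theorem sum_powersetCard_comp_card_filter {M : Type*} [AddCommMonoid M] (U : Finset α) (ℓ : ℕ)
    (f : ℕ → M) :
    ∑ S ∈ U.powersetCard ℓ, f #{a ∈ S | p a}
      = ∑ i ∈ range (ℓ + 1),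
          ((#{a ∈ U | p a}).choose i * (#{a ∈ U | ¬ p a}).choose (ℓ - i)) • f i := by
  have hmaps : ∀ S ∈ U.powersetCard ℓ, #{a ∈ S | p a} ∈ range (ℓ + 1) := fun S hS =>
    mem_range_succ_iff.2 ((card_filter_le S p).trans (mem_powersetCard.1 hS).2.le)
  rw [← sum_fiberwise_of_maps_to hmaps]
  refine sum_congr rfl fun i hi => ?_
  rw [sum_congr rfl fun S hS => congrArg f (mem_filter.1 hS).2, sum_const,
    card_filter_powersetCard_card_filter_eq p U (mem_range_succ_iff.1 hi)]

end CountingByPredicate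

lemma om_flipS_add (n : ℕ) (x : ℕ → Bool) {S : Finset ℕ} (hS : S ⊆ range n) :
    om n (flipS S x) + #{i ∈ S | x i = true} = om n x + #{i ∈ S | x i = false} := by
  have hflip : {i ∈ range n | flipS S x i = true}
      = {i ∈ range n | x i = true} \ S ∪ {i ∈ S | x i = false} := by
    ext i
    by_cases hi : i ∈ S
    · simp [flipS, hi, hS hi]
    · simp [flipS, hi]
  have hinter : {i ∈ range n | x i = true} ∩ S = {i ∈ S | x i = true} := by
    ext i
    constructor <;> simp +contextual [hS _]
  have hdisj : Disjoint ({i ∈ range n | x i = true} \ S) {i ∈ S | x i = false} :=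
    disjoint_left.2 fun i hi hi' => (mem_sdiff.1 hi).2 (mem_filter.1 hi').1
  have := card_sdiff_add_card_inter {i ∈ range n | x i = true} S
  rw [om, om, hflip, card_union_of_disjoint hdisj, ← hinter]
  omega

theorem stmt5_general (n ℓ : ℕ) (x : ℕ → Bool) :
    (∑ S ∈ (Finset.range n).powersetCard ℓ,
        ((om n (flipS S x) - om n x : ℕ) : ℝ)) / (n.choose ℓ : ℝ)
      = ∑ i ∈ Finset.Icc ((ℓ + 1) / 2) ℓ,
          ((n - om n x).choose i : ℝ) * ((om n x).choose (ℓ - i) : ℝ)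
            * ((2 * i - ℓ : ℕ) : ℝ) / (n.choose ℓ : ℝ) := by
  have hones : #{i ∈ range n | ¬ x i = false} = om n x := by simp [om]
  have hzeros : #{i ∈ range n | x i = false} = n - om n x := by
    have := card_filter_add_card_filter_not (s := range n) (x · = false)
    rw [card_range, hones] at this
    omega
  have hgain : ∀ S ∈ (range n).powersetCard ℓ,
      om n (flipS S x) - om n x = 2 * #{i ∈ S | x i = false} - ℓ := by
    intro S hS
    obtain ⟨hSn, hSℓ⟩ := mem_powersetCard.1 hS
    have := om_flipS_add n x hSn
    have := card_filter_add_card_filter_not (s := S) (x · = false)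
    simp only [Bool.not_eq_false] at this
    omega
  rw [← sum_div, sum_congr rfl fun S hS => congrArg (fun k : ℕ => (k : ℝ)) (hgain S hS),
    sum_powersetCard_comp_card_filter (x · = false) _ _ (fun k => ((2 * k - ℓ : ℕ) : ℝ)),
    hzeros, hones]
  congr 1
  have hsub : Icc ((ℓ + 1) / 2) ℓ ⊆ range (ℓ + 1) := fun i hi =>
    mem_range_succ_iff.2 (mem_Icc.1 hi).2
  rw [← sum_subset hsub fun i hiℓ hi => ?_]
  · simp only [nsmul_eq_mul, Nat.cast_mul]
  · have : 2 * i - ℓ = 0 := by rw [mem_range] at hiℓ; rw [mem_Icc] at hi; omega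
    simp [this]

theorem stmt5 (n ℓ : ℕ) (x : ℕ → Bool) (h1 : 1 ≤ ℓ) (h2 : ℓ ≤ n) :
    (∑ S ∈ (Finset.range n).powersetCard ℓ,
        ((om n (flipS S x) - om n x : ℕ) : ℝ)) / (n.choose ℓ : ℝ)
      = ∑ i ∈ Finset.Icc ((ℓ + 1) / 2) ℓ,
          ((n - om n x).choose i : ℝ) * ((om n x).choose (ℓ - i) : ℝ)
            * ((2 * i - ℓ : ℕ) : ℝ) / (n.choose ℓ : ℝ) :=
  stmt5_general n ℓ x
end

section
/- Let n ≥ 1. For an n-bit string x with Lo(x) = j, the probability that flipping a uniformly random set of k_opt = ⌊n/(j+1)⌋ distinct bits increases the LeadingOnes value is C(n-j-1, k_opt - 1)/C(n, k_opt), and consequently the expected waiting time for an improvement at fitness level j is C(n, k_opt)/C(n-j-1, k_opt-1). Summing, the expected number of evaluations for RLS_opt,LO (which always flips ⌊n/(Lo(x)+1)⌋ bits) to reach a LeadingOnes value ≥ i, starting from a uniformly random string, equals 1 + (1/2)·Σ_{j=0}^{i-1} C(n, ⌊n/(j+1)⌋)/C(n-j-1, ⌊n/(j+1)⌋ - 1).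 -/
/-- Number of leading ones of a bit string `x : Fin n → Bool`. -/
def loF (n : ℕ) (x : Fin n → Bool) : ℕ :=
  (Finset.univ.filter (fun i : Fin n => ∀ j ≤ i, x j = true)).card

/-- Flip the bits of `x` at the positions in `S`. -/
def flipF (n : ℕ) (S : Finset (Fin n)) (x : Fin n → Bool) : Fin n → Bool :=
  fun i => if i ∈ S then !(x i) else x i

/-! A string on level `j` reads `1^j 0 ⋯`. Whether flipping a set `S` of bits is rejected, stays on
level `j` or improves depends on `S` alone: on whether `min S` is `< j`, `> j` or `= j`, and the
last case occurs for `C(n-j-1, k-1)` of the `C(n, k)` sets of size `k`. In the two accepted cases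
`flipF S` maps level `j` bijectively onto itself, resp. onto the strings of fitness `> j`. Summing
the recurrence over the `2^(n-j-1)` strings of level `j` therefore gives
`∑_{Lo = j} E = ∑_{Lo > j} E + 2^(n-j-1) · C(n,k)/C(n-j-1,k-1)`, and as `2^(n-j)` strings have
fitness `≥ j`, downward induction on `j` yields
`2 ∑_{Lo ≥ j} E = 2^(n-j) ∑_{j ≤ m < i} C(n,k_m)/C(n-m-1,k_m-1)`. -/

open Finset Function

def rlsStep (n : ℕ) (S : Finset (Fin n)) (x : Fin n → Bool) : Fin n → Bool :=
  if loF n x ≤ loF n (flipF n S x) then flipF n S x else x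

noncomputable def waitingTime (n j k : ℕ) : ℝ := (n.choose k : ℝ) / ((n - j - 1).choose (k - 1) : ℝ)

namespace LeadingOnes

variable {n : ℕ}

theorem lt_loF_iff (x : Fin n → Bool) (t : Fin n) : (t : ℕ) < loF n x ↔ ∀ s ≤ t, x s = true :=
  Fin.lt_card_filter_univ_iff_apply_of_imp _ fun _ _ hji h s hs => h s (hs.trans hji)

theorem le_loF_iff (x : Fin n → Bool) {j : ℕ} (hj : j ≤ n) :
    j ≤ loF n x ↔ ∀ t : Fin n, (t : ℕ) < j → x t = true := by
  refine ⟨fun h t ht => (lt_loF_iff x t).1 (ht.trans_le h) t le_rfl, fun h => ?_⟩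
  by_contra! hlt
  have hq : ¬ ∀ s ≤ (⟨loF n x, by omega⟩ : Fin n), x s = true := by
    rw [← lt_loF_iff]; exact lt_irrefl _
  exact hq fun s hs => h s (lt_of_le_of_lt hs hlt)

theorem loF_eq_iff (x : Fin n → Bool) (p : Fin n) :
    loF n x = p ↔ (∀ t < p, x t = true) ∧ x p = false := by
  rw [le_antisymm_iff, ← not_lt, lt_loF_iff, le_loF_iff x p.isLt.le]
  refine ⟨fun ⟨hnot, hlt⟩ => ⟨hlt, ?_⟩, fun ⟨hlt, hp⟩ => ⟨fun h => ?_, hlt⟩⟩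
  · by_contra hp
    exact hnot fun s hs => hs.lt_or_eq.elim (hlt s) fun h => h ▸ by simpa using hp
  · simpa [hp] using h p le_rfl

theorem flipF_apply_of_mem {S : Finset (Fin n)} {t : Fin n} (x : Fin n → Bool) (ht : t ∈ S) :
    flipF n S x t = !x t := if_pos ht

theorem flipF_apply_of_notMem {S : Finset (Fin n)} {t : Fin n} (x : Fin n → Bool) (ht : t ∉ S) :
    flipF n S x t = x t := if_neg ht

theorem flipF_involutive (S : Finset (Fin n)) : Involutive (flipF n S) := fun x => by
  funext t
  by_cases ht : t ∈ S <;> simp [flipF, ht]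

section Level

variable {x y : Fin n → Bool} {p : Fin n} {S : Finset (Fin n)}

theorem loF_flipF_lt_of_mem {t : Fin n} (hx : loF n x = p) (ht : t ∈ S) (htp : t < p) :
    loF n (flipF n S x) < p := by
  have hxt : x t = true := ((loF_eq_iff x p).1 hx).1 t htp
  have : ¬ (t : ℕ) < loF n (flipF n S x) := fun h => by
    simpa [flipF_apply_of_mem x ht, hxt] using (lt_loF_iff _ t).1 h t le_rfl
  omega

theorem loF_flipF_of_lt (hx : loF n x = p) (hS : ∀ t ∈ S, p < t) : loF n (flipF n S x) = p := by
  have hnot : ∀ t ≤ p, t ∉ S := fun t htp ht => (hS t ht).not_ge htp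
  rw [loF_eq_iff] at hx ⊢
  refine ⟨fun t htp => ?_, ?_⟩
  · rw [flipF_apply_of_notMem x (hnot t htp.le)]; exact hx.1 t htp
  · rw [flipF_apply_of_notMem x (hnot p le_rfl)]; exact hx.2

theorem lt_loF_flipF_iff (hx : loF n x = p) :
    (p : ℕ) < loF n (flipF n S x) ↔ IsLeast (S : Set (Fin n)) p := by
  rw [loF_eq_iff] at hx
  rw [lt_loF_iff]
  constructor
  · intro h
    refine ⟨?_, fun t ht => ?_⟩
    · by_contra hp
      simpa [flipF_apply_of_notMem x hp, hx.2] using h p le_rfl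
    · by_contra htp
      have := h t (le_of_not_ge htp)
      simp [flipF_apply_of_mem x ht, hx.1 t (lt_of_not_ge htp)] at this
  · rintro ⟨hp, hlow⟩ s hs
    rcases hs.lt_or_eq with hs | rfl
    · rw [flipF_apply_of_notMem x fun h => (hlow h).not_gt hs]; exact hx.1 s hs
    · simp [flipF_apply_of_mem x hp, hx.2]

theorem loF_flipF_of_isLeast (hy : (p : ℕ) < loF n y) (hS : IsLeast (S : Set (Fin n)) p) :
    loF n (flipF n S y) = p := by
  rw [lt_loF_iff] at hy
  rw [loF_eq_iff]
  refine ⟨fun t htp => ?_, ?_⟩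
  · rw [flipF_apply_of_notMem y fun h => (hS.2 h).not_gt htp]; exact hy t htp.le
  · simp [flipF_apply_of_mem y hS.1, hy p le_rfl]

theorem sum_loF_eq_comp_flipF {M : Type*} [AddCommMonoid M] (hS : IsLeast (S : Set (Fin n)) p)
    (f : (Fin n → Bool) → M) :
    ∑ x with loF n x = p, f (flipF n S x) = ∑ y with (p : ℕ) < loF n y, f y := by
  refine sum_nbij' (flipF n S) (flipF n S) (fun x hx => ?_) (fun y hy => ?_)
    (fun x _ => flipF_involutive S x) (fun y _ => flipF_involutive S y) (fun _ _ => rfl)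
  · simp only [mem_filter, mem_univ, true_and] at hx ⊢
    exact (lt_loF_flipF_iff hx).2 hS
  · simp only [mem_filter, mem_univ, true_and] at hy ⊢
    exact loF_flipF_of_isLeast hy hS

theorem sum_loF_eq_rlsStep_of_isLeast {M : Type*} [AddCommMonoid M]
    (hS : IsLeast (S : Set (Fin n)) p) (f : (Fin n → Bool) → M) :
    ∑ x with loF n x = p, f (rlsStep n S x) = ∑ y with (p : ℕ) < loF n y, f y := by
  rw [← sum_loF_eq_comp_flipF hS]
  refine sum_congr rfl fun x hx => ?_
  rw [mem_filter] at hx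
  rw [rlsStep, if_pos (hx.2 ▸ ((lt_loF_flipF_iff hx.2).2 hS).le)]

theorem sum_loF_eq_rlsStep_of_not_isLeast {M : Type*} [AddCommMonoid M]
    (hS : ¬ IsLeast (S : Set (Fin n)) p) (f : (Fin n → Bool) → M) :
    ∑ x with loF n x = p, f (rlsStep n S x) = ∑ x with loF n x = p, f x := by
  by_cases hlow : ∃ t ∈ S, t < p
  · obtain ⟨t, ht, htp⟩ := hlow
    refine sum_congr rfl fun x hx => ?_
    rw [mem_filter] at hx
    rw [rlsStep, if_neg (hx.2 ▸ (loF_flipF_lt_of_mem hx.2 ht htp).not_ge)]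
  · have hS' : ∀ t ∈ S, p < t := fun t ht => by
      simp only [not_exists, not_and, not_lt] at hlow
      exact (hlow t ht).lt_of_ne fun h => hS ⟨h ▸ ht, fun s hs => hlow s hs⟩
    refine sum_nbij' (flipF n S) (flipF n S) (fun x hx => ?_) (fun x hx => ?_)
      (fun x _ => flipF_involutive S x) (fun x _ => flipF_involutive S x) (fun x hx => ?_)
    all_goals simp only [mem_filter, mem_univ, true_and] at hx ⊢
    · exact loF_flipF_of_lt hx hS'
    · exact loF_flipF_of_lt hx hS'
    · rw [rlsStep, if_pos (loF_flipF_of_lt hx hS' ▸ hx ▸ le_rfl)]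

end Level

theorem card_le_loF {j : ℕ} (hj : j ≤ n) : #{x : Fin n → Bool | j ≤ loF n x} = 2 ^ (n - j) := by
  have : ({x : Fin n → Bool | j ≤ loF n x} : Finset _) =
      Fintype.piFinset fun t : Fin n => if (t : ℕ) < j then {true} else univ := by
    ext x
    simp only [mem_filter, mem_univ, true_and, le_loF_iff x hj, Fintype.mem_piFinset]
    refine forall_congr' fun t => ?_
    split_ifs with ht <;> simp [ht]
  rw [this, Fintype.card_piFinset]
  simp only [apply_ite card, card_singleton, card_univ, Fintype.card_bool]
  rw [prod_ite, prod_const_one, one_mul, prod_const]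
  have := card_filter_add_card_filter_not (s := univ) fun t : Fin n => (t : ℕ) < j
  rw [Fin.card_filter_val_lt, card_univ, Fintype.card_fin] at this
  congr 1
  omega

theorem card_loF_eq (p : Fin n) : #{x : Fin n → Bool | loF n x = p} = 2 ^ (n - p - 1) := by
  rw [card_eq_sum_ones, sum_loF_eq_comp_flipF (S := {p}) (by simp) fun _ => 1, ← card_eq_sum_ones,
    Nat.sub_sub]
  exact card_le_loF (j := p + 1) p.isLt

theorem card_isLeast_powersetCard (p : Fin n) {k : ℕ} (hk : 0 < k) :
    #{S ∈ powersetCard k univ | p ∈ S ∧ ∀ t ∈ S, p ≤ t} = (n - p - 1).choose (k - 1) := by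
  rw [show n - p - 1 = #(Ioi p) by rw [Fin.card_Ioi]; omega, ← card_powersetCard]
  have hU_notMem : ∀ {U}, U ∈ powersetCard (k - 1) (Ioi p) → p ∉ U := fun hU hp =>
    lt_irrefl p (mem_Ioi.1 ((mem_powersetCard.1 hU).1 hp))
  refine card_nbij' (fun S => S.erase p) (insert p) (fun S hS => ?_) (fun U hU => ?_)
    (fun S hS => insert_erase (mem_filter.1 hS).2.1) (fun U hU => erase_insert (hU_notMem hU))
  · obtain ⟨hSk, hp, hle⟩ := mem_filter.1 hS
    rw [mem_powersetCard] at hSk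
    refine mem_powersetCard.2 ⟨fun t ht => mem_Ioi.2 ?_, by rw [card_erase_of_mem hp, hSk.2]⟩
    exact (hle t (mem_of_mem_erase ht)).lt_of_ne' (ne_of_mem_erase ht)
  · have hpU := hU_notMem hU
    rw [mem_coe, mem_powersetCard] at hU
    refine mem_filter.2
      ⟨mem_powersetCard.2 ⟨subset_univ _, ?_⟩, mem_insert_self p U, fun t ht => ?_⟩
    · rw [card_insert_of_notMem hpU, hU.2]; omega
    · rcases mem_insert.1 ht with rfl | ht
      · exact le_rfl
      · exact (mem_Ioi.1 (hU.1 ht)).le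

theorem sum_loF_eq_sum_lt_loF_add (p : Fin n) {k : ℕ} (hk0 : 0 < k) (hk : k ≤ n - p)
    (E : (Fin n → Bool) → ℝ)
    (hE : ∀ x, loF n x = p →
      E x = 1 + 1 / (n.choose k : ℝ) * ∑ S ∈ powersetCard k univ, E (rlsStep n S x)) :
    ∑ x with loF n x = p, E x
      = ∑ y with (p : ℕ) < loF n y, E y + 2 ^ (n - p - 1) * waitingTime n p k := by
  set L := ∑ x with loF n x = p, E x
  set U := ∑ y with (p : ℕ) < loF n y, E y
  have hC : (0 : ℝ) < n.choose k := mod_cast Nat.choose_pos (by omega)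
  have hc : (0 : ℝ) < (n - p - 1).choose (k - 1) := mod_cast Nat.choose_pos (by omega)
  have hrest : (#{S ∈ powersetCard k univ | ¬(p ∈ S ∧ ∀ t ∈ S, p ≤ t)} : ℝ)
      = n.choose k - (n - p - 1).choose (k - 1) := by
    rw [eq_sub_iff_add_eq', ← card_isLeast_powersetCard p hk0]
    exact_mod_cast (card_filter_add_card_filter_not _).trans (by simp)
  have hsteps : ∑ S ∈ powersetCard k univ, ∑ x with loF n x = p, E (rlsStep n S x)
      = (n - p - 1).choose (k - 1) * U + (n.choose k - (n - p - 1).choose (k - 1)) * L := by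
    rw [← hrest, ← card_isLeast_powersetCard p hk0, ← nsmul_eq_mul, ← nsmul_eq_mul,
      ← sum_const, ← sum_const, ← sum_ite]
    refine sum_congr rfl fun S _ => ?_
    split_ifs with hS
    · exact sum_loF_eq_rlsStep_of_isLeast hS E
    · exact sum_loF_eq_rlsStep_of_not_isLeast hS E
  have hL : L = 2 ^ (n - p - 1) + 1 / (n.choose k : ℝ) *
      ((n - p - 1).choose (k - 1) * U + (n.choose k - (n - p - 1).choose (k - 1)) * L) := by
    calc L = ∑ x with loF n x = p,
          (1 + 1 / (n.choose k : ℝ) * ∑ S ∈ powersetCard k univ, E (rlsStep n S x)) :=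
          sum_congr rfl fun x hx => hE x (mem_filter.1 hx).2
      _ = _ := by
          rw [sum_add_distrib, ← mul_sum, sum_comm, hsteps, sum_const, card_loF_eq]
          simp
  rw [waitingTime]
  field_simp at hL ⊢
  linarith

theorem two_mul_sum_le_loF {i : ℕ} (hi : i ≤ n) (E : (Fin n → Bool) → ℝ)
    (hopt : ∀ x, i ≤ loF n x → E x = 0)
    (hrec : ∀ x, loF n x < i → E x = 1 + 1 / (n.choose (n / (loF n x + 1)) : ℝ) *
      ∑ S ∈ powersetCard (n / (loF n x + 1)) univ, E (rlsStep n S x))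
    {j : ℕ} (hj : j ≤ i) :
    2 * ∑ x with j ≤ loF n x, E x
      = 2 ^ (n - j) * ∑ m ∈ Ico j i, waitingTime n m (n / (m + 1)) := by
  induction hj using Nat.decreasingInduction with
  | self => simp [sum_eq_zero fun x hx => hopt x (mem_filter.1 hx).2]
  | of_succ j hji ih =>
    have hjn : j < n := hji.trans_le hi
    have hk0 : 0 < n / (j + 1) := Nat.div_pos hjn (Nat.succ_pos j)
    have hk : n / (j + 1) + j ≤ n := by nlinarith [Nat.div_mul_le_self n (j + 1)]
    have hlevel := sum_loF_eq_sum_lt_loF_add ⟨j, hjn⟩ hk0 (by simp only; omega) E fun x hx => by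
      have h := hrec x (by simp only at hx; omega)
      rwa [hx] at h
    have hsplit : ∑ x with j ≤ loF n x, E x
        = ∑ x with loF n x = j, E x + ∑ x with j + 1 ≤ loF n x, E x := by
      simp only [sum_filter, ← sum_add_distrib]
      refine sum_congr rfl fun x _ => ?_
      split_ifs <;> first | omega | simp
    have hup : ∑ y with j < loF n y, E y = ∑ y with j + 1 ≤ loF n y, E y := rfl
    have hpow : (2 : ℝ) ^ (n - j) = 2 * 2 ^ (n - j - 1) := by
      rw [← pow_succ']; congr 1; omega
    simp only [hup] at hlevel
    rw [hsplit, hlevel, sum_eq_sum_Ico_succ_bot hji, hpow]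
    rw [Nat.sub_add_eq] at ih
    linear_combination 2 * ih

end LeadingOnes

theorem stmt7_general (n i : ℕ) (hi : i ≤ n) (E : (Fin n → Bool) → ℝ)
    (hopt : ∀ x, i ≤ loF n x → E x = 0)
    (hrec : ∀ x, loF n x < i →
      E x = 1 + (1 / (n.choose (n / (loF n x + 1)) : ℝ)) *
        ∑ S ∈ Finset.univ.powersetCard (n / (loF n x + 1)),
          E (if loF n x ≤ loF n (flipF n S x) then flipF n S x else x)) :
    (∀ x : Fin n → Bool, loF n x < n →
      (((Finset.univ.powersetCard (n / (loF n x + 1))).filter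
          (fun S : Finset (Fin n) => loF n x < loF n (flipF n S x))).card : ℝ)
          / (n.choose (n / (loF n x + 1)) : ℝ)
        = ((n - loF n x - 1).choose (n / (loF n x + 1) - 1) : ℝ)
          / (n.choose (n / (loF n x + 1)) : ℝ)) ∧
    (∀ j : ℕ, j < n →
      (n.choose (n / (j + 1)) : ℝ) / ((n - j - 1).choose (n / (j + 1) - 1) : ℝ)
        = (((n - j - 1).choose (n / (j + 1) - 1) : ℝ) / (n.choose (n / (j + 1)) : ℝ))⁻¹) ∧
    1 + (1 / (2 : ℝ) ^ n) * ∑ x : Fin n → Bool, E x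
      = 1 + (1 / 2 : ℝ) * ∑ j ∈ Finset.range i,
          (n.choose (n / (j + 1)) : ℝ) / ((n - j - 1).choose (n / (j + 1) - 1) : ℝ) := by
  refine ⟨fun x hx => ?_, fun j _ => (inv_div _ _).symm, ?_⟩
  · have himp : ∀ S ∈ powersetCard (n / (loF n x + 1)) univ, loF n x < loF n (flipF n S x) ↔
        (⟨loF n x, hx⟩ : Fin n) ∈ S ∧ ∀ t ∈ S, ⟨loF n x, hx⟩ ≤ t :=
      fun S _ => LeadingOnes.lt_loF_flipF_iff (p := ⟨loF n x, hx⟩) rfl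
    rw [filter_congr himp,
      LeadingOnes.card_isLeast_powersetCard _ (Nat.div_pos hx (Nat.succ_pos _))]
  · have h := LeadingOnes.two_mul_sum_le_loF hi E hopt hrec (Nat.zero_le i)
    simp only [zero_le, filter_true, Nat.sub_zero, Nat.Ico_zero_eq_range, waitingTime] at h
    field_simp
    linear_combination h

/-- At fitness level `j`, flipping `k = ⌊n/(j+1)⌋` uniformly random distinct bits
improves LeadingOnes with probability `C(n-j-1,k-1)/C(n,k)`; the waiting time is the
reciprocal; and `RLS_opt,LO` started from a uniformly random string reaches fitness
at least `i` after `1 + (1/2)·∑_{j<i} C(n,⌊n/(j+1)⌋)/C(n-j-1,⌊n/(j+1)⌋-1)` evaluations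
in expectation, where `E x` is the expected number of further iterations from `x`. -/
theorem stmt7 (n i : ℕ) (hn : 1 ≤ n) (hi : i ≤ n) (E : (Fin n → Bool) → ℝ)
    (hopt : ∀ x, i ≤ loF n x → E x = 0)
    (hrec : ∀ x, loF n x < i →
      E x = 1 + (1 / (n.choose (n / (loF n x + 1)) : ℝ)) *
        ∑ S ∈ Finset.univ.powersetCard (n / (loF n x + 1)),
          E (if loF n x ≤ loF n (flipF n S x) then flipF n S x else x)) :
    (∀ x : Fin n → Bool, loF n x < n →
      (((Finset.univ.powersetCard (n / (loF n x + 1))).filter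
          (fun S : Finset (Fin n) => loF n x < loF n (flipF n S x))).card : ℝ)
          / (n.choose (n / (loF n x + 1)) : ℝ)
        = ((n - loF n x - 1).choose (n / (loF n x + 1) - 1) : ℝ)
          / (n.choose (n / (loF n x + 1)) : ℝ)) ∧
    (∀ j : ℕ, j < n →
      (n.choose (n / (j + 1)) : ℝ) / ((n - j - 1).choose (n / (j + 1) - 1) : ℝ)
        = (((n - j - 1).choose (n / (j + 1) - 1) : ℝ) / (n.choose (n / (j + 1)) : ℝ))⁻¹) ∧
    1 + (1 / (2 : ℝ) ^ n) * ∑ x : Fin n → Bool, E x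
      = 1 + (1 / 2 : ℝ) * ∑ j ∈ Finset.range i,
          (n.choose (n / (j + 1)) : ℝ) / ((n - j - 1).choose (n / (j + 1) - 1) : ℝ) :=
  stmt7_general n i hi E hopt hrec
end

section
/- For every n ≥ 1, the expected optimization time of RLS_opt,LO on LeadingOnes, T = 1 + (1/2)·Σ_{j=0}^{n-1} C(n, ⌊n/(j+1)⌋)/C(n-j-1, ⌊n/(j+1)⌋ - 1), satisfies T ≤ 1 + n²/2, i.e., RLS_opt,LO is at least as fast in expectation as standard RLS. -/
/-- Key combinatorial lemma: if `1 ≤ ℓ` and `ℓ * (j+1) ≤ n`, then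
`C(n, ℓ) ≤ n * C(n - j - 1, ℓ - 1)`. -/
lemma aux_choose_le (n j : ℕ) : ∀ ℓ, 1 ≤ ℓ → ℓ * (j + 1) ≤ n →
    n.choose ℓ ≤ n * (n - j - 1).choose (ℓ - 1) := by
  intro ℓ hℓ0
  induction ℓ, hℓ0 using Nat.le_induction with
  | base =>
    intro h
    simp [Nat.choose_one_right]
  | succ ℓ hℓ ih =>
    intro h
    have hℓn : ℓ * (j + 1) ≤ n := le_trans (by nlinarith) h
    have ihh := ih hℓn
    -- key identities
    have h1 : n.choose (ℓ + 1) * (ℓ + 1) = n.choose ℓ * (n - ℓ) :=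
      Nat.choose_succ_right_eq n ℓ
    have h2 : (n - j - 1).choose ℓ * ℓ
        = (n - j - 1).choose (ℓ - 1) * (n - j - 1 - (ℓ - 1)) := by
      have := Nat.choose_succ_right_eq (n - j - 1) (ℓ - 1)
      have hℓ1 : ℓ - 1 + 1 = ℓ := Nat.succ_pred_eq_of_pos hℓ
      rw [hℓ1] at this
      exact this
    -- arithmetic facts
    have hjn : ℓ * j + ℓ + j + 1 ≤ n := by nlinarith
    have hjl : ℓ + j + 1 ≤ n := by nlinarith
    have hsub : n - j - 1 - (ℓ - 1) = n - j - ℓ := by omega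
    rw [hsub] at h2
    -- the crucial inequality (n - ℓ) * ℓ ≤ (n - j - ℓ) * (ℓ + 1)
    have hkey : (n - ℓ) * ℓ ≤ (n - j - ℓ) * (ℓ + 1) := by
      have ha : n - ℓ = (n - j - ℓ) + j := by omega
      rw [ha, add_mul]
      have hb : j * ℓ + (j + ℓ) ≤ n := by nlinarith
      have : j * ℓ ≤ n - j - ℓ := by
        rw [Nat.sub_sub]
        exact Nat.le_sub_of_add_le hb
      nlinarith [this]
    -- combine
    have main : n.choose (ℓ + 1) * ((ℓ + 1) * ℓ)
        ≤ n * (n - j - 1).choose ℓ * ((ℓ + 1) * ℓ) := by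
      calc n.choose (ℓ + 1) * ((ℓ + 1) * ℓ)
          = n.choose ℓ * (n - ℓ) * ℓ := by rw [← mul_assoc, h1]
        _ ≤ n * (n - j - 1).choose (ℓ - 1) * (n - ℓ) * ℓ := by
            apply Nat.mul_le_mul_right
            exact Nat.mul_le_mul_right _ ihh
        _ = n * ((n - j - 1).choose (ℓ - 1) * ((n - ℓ) * ℓ)) := by ring
        _ ≤ n * ((n - j - 1).choose (ℓ - 1) * ((n - j - ℓ) * (ℓ + 1))) := by
            apply Nat.mul_le_mul_left
            exact Nat.mul_le_mul_left _ hkey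
        _ = n * ((n - j - 1).choose (ℓ - 1) * (n - j - ℓ)) * (ℓ + 1) := by ring
        _ = n * ((n - j - 1).choose ℓ * ℓ) * (ℓ + 1) := by rw [← h2]
        _ = n * (n - j - 1).choose ℓ * ((ℓ + 1) * ℓ) := by ring
    have hpos : 0 < (ℓ + 1) * ℓ := by positivity
    exact Nat.le_of_mul_le_mul_right main hpos

theorem stmt17 (n : ℕ) (hn : 1 ≤ n) :
    1 + (1 / 2 : ℝ) * ∑ j ∈ Finset.range n,
        (n.choose (n / (j + 1)) : ℝ) / ((n - j - 1).choose (n / (j + 1) - 1) : ℝ)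
      ≤ 1 + (n : ℝ) ^ 2 / 2 := by
  have hterm : ∀ j ∈ Finset.range n,
      (n.choose (n / (j + 1)) : ℝ) / ((n - j - 1).choose (n / (j + 1) - 1) : ℝ)
        ≤ (n : ℝ) := by
    intro j hj
    rw [Finset.mem_range] at hj
    set k := n / (j + 1) with hk
    have hk1 : 1 ≤ k := Nat.one_le_div_iff (Nat.succ_pos j) |>.mpr hj
    have hkn : k * (j + 1) ≤ n := Nat.div_mul_le_self n (j + 1)
    have hmain : n.choose k ≤ n * (n - j - 1).choose (k - 1) :=
      aux_choose_le n j k hk1 hkn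
    have hle : k - 1 ≤ n - j - 1 := by
      have : k + j ≤ n := by nlinarith
      omega
    have hden : 0 < (n - j - 1).choose (k - 1) := Nat.choose_pos hle
    have hdenR : (0 : ℝ) < ((n - j - 1).choose (k - 1) : ℝ) := by
      exact_mod_cast hden
    rw [div_le_iff₀ hdenR]
    exact_mod_cast hmain
  have hsum : ∑ j ∈ Finset.range n,
      (n.choose (n / (j + 1)) : ℝ) / ((n - j - 1).choose (n / (j + 1) - 1) : ℝ)
        ≤ (n : ℝ) ^ 2 := by
    calc ∑ j ∈ Finset.range n,
        (n.choose (n / (j + 1)) : ℝ) / ((n - j - 1).choose (n / (j + 1) - 1) : ℝ)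
        ≤ ∑ j ∈ Finset.range n, (n : ℝ) := Finset.sum_le_sum hterm
      _ = (n : ℝ) ^ 2 := by simp [sq]
  linarith
end

section
/- For an n-bit string x with m = Om(x) ≥ 2n/3 ones, single-bit flips maximize the expected OneMax drift: for every ℓ with 2 ≤ ℓ ≤ n, Σ_{i=⌈ℓ/2⌉}^{ℓ} C(n-m, i)·C(m, ℓ-i)·(2i-ℓ)/C(n,ℓ) ≤ (n-m)/n. -/
set_option maxHeartbeats 2000000

def Tsum (z m L : ℕ) : ℕ := ∑ i ∈ Finset.range (L+1), z.choose i * m.choose (L-i) * (2*i - L)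

lemma quad_split (a b : ℕ) : (a+b)*((a+b)-1) = a*(a-1) + 2*(a*b) + b*(b-1) := by
  rcases a with _ | a' <;> rcases b with _ | b' <;> simp [Nat.succ_sub_one] <;> ring_nf

lemma pair_sum_le {s : Finset ℕ} {F G : ℕ → ℕ} {a b : ℕ} (ha : a ∈ s) (hb : b ∈ s.erase a)
    (hpoint : ∀ j ∈ (s.erase a).erase b, F j ≤ G j) (hpair : F a + F b ≤ G a + G b) :
    ∑ j ∈ s, F j ≤ ∑ j ∈ s, G j := by
  rw [← Finset.sum_erase_add s F ha, ← Finset.sum_erase_add _ F hb,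
      ← Finset.sum_erase_add s G ha, ← Finset.sum_erase_add _ G hb]
  have := Finset.sum_le_sum hpoint
  omega

lemma odd_step (z m L : ℕ) (hzm : 2*z ≤ m) (hLn : L ≤ z + m) (c : ℕ) (hL : L = 2*c+3) :
    L * ((L-1) * Tsum z m L) ≤ (z + m + 1 - L) * ((z + m + 2 - L) * Tsum z m (L - 2)) := by
  subst hL
  rw [show 2*c+3-1 = 2*c+2 from by omega, show 2*c+3-2 = 2*c+1 from by omega,
      show z+m+1-(2*c+3) = z+m-(2*c+2) from by omega,
      show z+m+2-(2*c+3) = z+m-(2*c+1) from by omega]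
  unfold Tsum
  rw [Finset.mul_sum, Finset.mul_sum, Finset.mul_sum, Finset.mul_sum]
  have split : ∀ i ∈ Finset.range (2*c+3+1),
      (2*c+3) * ((2*c+2) * (z.choose i * m.choose (2*c+3-i) * (2*i - (2*c+3))))
      = i*(i-1) * (z.choose i * m.choose (2*c+3-i) * (2*i - (2*c+3)))
        + 2*(i*(2*c+3-i)) * (z.choose i * m.choose (2*c+3-i) * (2*i - (2*c+3)))
        + (2*c+3-i)*((2*c+3-i)-1) * (z.choose i * m.choose (2*c+3-i) * (2*i - (2*c+3))) := by
    intro i hi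
    simp only [Finset.mem_range] at hi
    have h2 : (2*c+3) * ((2*c+2) * (z.choose i * m.choose (2*c+3-i) * (2*i - (2*c+3))))
        = ((i + (2*c+3-i)) * ((i + (2*c+3-i)) - 1))
          * (z.choose i * m.choose (2*c+3-i) * (2*i - (2*c+3))) := by
      rw [show i + (2*c+3-i) = 2*c+3 from by omega, show (2*c+3) - 1 = 2*c+2 from by omega]
      ring
    rw [h2, quad_split]; ring
  rw [Finset.sum_congr rfl split, Finset.sum_add_distrib, Finset.sum_add_distrib]
  have sA : ∑ i ∈ Finset.range (2*c+3+1),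
      i*(i-1) * (z.choose i * m.choose (2*c+3-i) * (2*i - (2*c+3)))
      = ∑ j ∈ Finset.range (2*c+2),
        z.choose j * m.choose (2*c+1-j) * ((z-j)*(z-(j+1))*(2*(j+2) - (2*c+3))) := by
    rw [Finset.sum_range_succ']
    simp only [Nat.zero_mul, Nat.mul_zero, zero_mul, mul_zero, add_zero, Nat.add_sub_cancel]
    rw [show 2*c+3 = (2*c+2)+1 from by omega, Finset.sum_range_succ']
    simp only [Nat.zero_mul, Nat.mul_zero, zero_mul, mul_zero, add_zero, Nat.add_sub_cancel]
    refine Finset.sum_congr rfl (fun j hj => ?_)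
    simp only [Finset.mem_range] at hj
    rw [show (2*c+2)+1-(j+1+1) = 2*c+1-j from by omega]
    have e1 : z.choose (j+1+1) * (j+1+1) = z.choose (j+1) * (z-(j+1)) :=
      Nat.choose_succ_right_eq z (j+1)
    have e2 : z.choose (j+1) * (j+1) = z.choose j * (z-j) := Nat.choose_succ_right_eq z j
    calc (j+1+1)*(j+1+1-1) * (z.choose (j+1+1) * m.choose (2*c+1-j) * (2*(j+1+1) - (2*c+2+1)))
        = (z.choose (j+1+1) * (j+1+1)) * ((j+1) * (m.choose (2*c+1-j) * (2*(j+1+1) - (2*c+2+1)))) := by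
          simp only [Nat.add_sub_cancel]; ring
      _ = (z.choose (j+1) * (j+1)) * ((z-(j+1)) * (m.choose (2*c+1-j) * (2*(j+1+1) - (2*c+2+1)))) := by
          rw [e1]; ring
      _ = (z.choose j * (z-j)) * ((z-(j+1)) * (m.choose (2*c+1-j) * (2*(j+1+1) - (2*c+2+1)))) := by
          rw [e2]
      _ = z.choose j * m.choose (2*c+1-j) * ((z-j)*(z-(j+1))*(2*(j+2) - (2*c+3))) := by
          rw [show j+1+1 = j+2 from by omega, show 2*c+2+1 = 2*c+3 from by omega]; ring
  have sB : ∑ i ∈ Finset.range (2*c+3+1),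
      2*(i*(2*c+3-i)) * (z.choose i * m.choose (2*c+3-i) * (2*i - (2*c+3)))
      = ∑ j ∈ Finset.range (2*c+2),
        z.choose j * m.choose (2*c+1-j) * (2*(z-j)*(m-(2*c+1-j))*(2*(j+1) - (2*c+3))) := by
    rw [Finset.sum_range_succ']
    simp only [Nat.zero_mul, Nat.mul_zero, zero_mul, mul_zero, add_zero]
    rw [show 2*c+3 = (2*c+2)+1 from by omega, Finset.sum_range_succ]
    simp only [Nat.sub_self, Nat.mul_zero, Nat.zero_mul, zero_mul, mul_zero, add_zero]
    refine Finset.sum_congr rfl (fun j hj => ?_)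
    simp only [Finset.mem_range] at hj
    rw [show (2*c+2)+1-(j+1) = (2*c+1-j)+1 from by omega]
    have e2 : z.choose (j+1) * (j+1) = z.choose j * (z-j) := Nat.choose_succ_right_eq z j
    have e3 : m.choose ((2*c+1-j)+1) * ((2*c+1-j)+1) = m.choose (2*c+1-j) * (m-(2*c+1-j)) :=
      Nat.choose_succ_right_eq m (2*c+1-j)
    calc 2*((j+1)*((2*c+1-j)+1)) * (z.choose (j+1) * m.choose ((2*c+1-j)+1) * (2*(j+1) - (2*c+2+1)))
        = (z.choose (j+1) * (j+1)) * ((m.choose ((2*c+1-j)+1) * ((2*c+1-j)+1))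
            * (2 * (2*(j+1) - (2*c+2+1)))) := by ring
      _ = (z.choose j * (z-j)) * ((m.choose (2*c+1-j) * (m-(2*c+1-j)))
            * (2 * (2*(j+1) - (2*c+2+1)))) := by rw [e2, e3]
      _ = z.choose j * m.choose (2*c+1-j) * (2*(z-j)*(m-(2*c+1-j))*(2*(j+1) - (2*c+3))) := by
          rw [show 2*c+2+1 = 2*c+3 from by omega]; ring
  have sC : ∑ i ∈ Finset.range (2*c+3+1),
      (2*c+3-i)*((2*c+3-i)-1) * (z.choose i * m.choose (2*c+3-i) * (2*i - (2*c+3)))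
      = ∑ j ∈ Finset.range (2*c+2),
        z.choose j * m.choose (2*c+1-j) * ((m-((2*c+1-j)+1))*(m-(2*c+1-j))*(2*j - (2*c+3))) := by
    rw [Finset.sum_range_succ]
    rw [show 2*c+3-(2*c+3) = 0 from by omega]
    simp only [Nat.zero_mul, Nat.mul_zero, zero_mul, mul_zero, add_zero]
    rw [show 2*c+3 = (2*c+2)+1 from by omega, Finset.sum_range_succ]
    rw [show 2*c+2+1-(2*c+2) = 1 from by omega]
    simp only [Nat.sub_self, Nat.mul_zero, Nat.zero_mul, zero_mul, mul_zero, add_zero,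
      Nat.mul_one, Nat.one_mul]
    refine Finset.sum_congr rfl (fun j hj => ?_)
    simp only [Finset.mem_range] at hj
    rw [show (2*c+2)+1-j = ((2*c+1-j)+1)+1 from by omega]
    simp only [Nat.add_sub_cancel]
    have e4 : m.choose (((2*c+1-j)+1)+1) * (((2*c+1-j)+1)+1)
        = m.choose ((2*c+1-j)+1) * (m-((2*c+1-j)+1)) := Nat.choose_succ_right_eq m ((2*c+1-j)+1)
    have e5 : m.choose ((2*c+1-j)+1) * ((2*c+1-j)+1) = m.choose (2*c+1-j) * (m-(2*c+1-j)) :=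
      Nat.choose_succ_right_eq m (2*c+1-j)
    calc (((2*c+1-j)+1)+1)*((2*c+1-j)+1) * (z.choose j * m.choose (((2*c+1-j)+1)+1) * (2*j - (2*c+2+1)))
        = (m.choose (((2*c+1-j)+1)+1) * (((2*c+1-j)+1)+1)) * (((2*c+1-j)+1)
            * (z.choose j * (2*j - (2*c+2+1)))) := by ring
      _ = (m.choose ((2*c+1-j)+1) * (m-((2*c+1-j)+1))) * (((2*c+1-j)+1)
            * (z.choose j * (2*j - (2*c+2+1)))) := by rw [e4]
      _ = (m.choose ((2*c+1-j)+1) * ((2*c+1-j)+1)) * ((m-((2*c+1-j)+1))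
            * (z.choose j * (2*j - (2*c+2+1)))) := by ring
      _ = (m.choose (2*c+1-j) * (m-(2*c+1-j))) * ((m-((2*c+1-j)+1))
            * (z.choose j * (2*j - (2*c+2+1)))) := by rw [e5]
      _ = z.choose j * m.choose (2*c+1-j) * ((m-((2*c+1-j)+1))*(m-(2*c+1-j))*(2*j - (2*c+3))) := by
          rw [show 2*c+2+1 = 2*c+3 from by omega]; ring
  rw [sA, sB, sC, ← Finset.sum_add_distrib, ← Finset.sum_add_distrib]
  rw [show 2*c+1+1 = 2*c+2 from by omega]
  refine pair_sum_le (a := c) (b := c+1) (by simp [Finset.mem_range]; omega)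
    (by simp [Finset.mem_erase, Finset.mem_range]; omega) ?_ ?_
  · -- pointwise for j ∉ {c, c+1}
    intro j hj
    simp only [Finset.mem_erase, Finset.mem_range] at hj
    obtain ⟨hj1, hj2, hj3⟩ := hj
    have lhs_eq : z.choose j * m.choose (2*c+1-j) * ((z-j)*(z-(j+1))*(2*(j+2) - (2*c+3)))
        + z.choose j * m.choose (2*c+1-j) * (2*(z-j)*(m-(2*c+1-j))*(2*(j+1) - (2*c+3)))
        + z.choose j * m.choose (2*c+1-j) * ((m-((2*c+1-j)+1))*(m-(2*c+1-j))*(2*j - (2*c+3)))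
        = (z.choose j * m.choose (2*c+1-j)) * ((z-j)*(z-(j+1))*(2*(j+2) - (2*c+3))
            + 2*(z-j)*(m-(2*c+1-j))*(2*(j+1) - (2*c+3))
            + (m-((2*c+1-j)+1))*(m-(2*c+1-j))*(2*j - (2*c+3))) := by ring
    have rhs_eq : (z+m-(2*c+2)) * ((z+m-(2*c+1)) * (z.choose j * m.choose (2*c+1-j) * (2*j - (2*c+1))))
        = (z.choose j * m.choose (2*c+1-j))
            * ((z+m-(2*c+2)) * ((z+m-(2*c+1)) * (2*j - (2*c+1)))) := by ring
    rw [lhs_eq, rhs_eq]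
    rcases Nat.eq_zero_or_pos (z.choose j * m.choose (2*c+1-j)) with h0 | hpos
    · rw [h0]; simp
    · apply Nat.mul_le_mul_left
      have hc1 : z.choose j ≠ 0 := by intro h; rw [h] at hpos; simp at hpos
      have hc2 : m.choose (2*c+1-j) ≠ 0 := by intro h; rw [h] at hpos; simp at hpos
      have hjz : j ≤ z := by by_contra h; exact hc1 (Nat.choose_eq_zero_of_lt (by omega))
      have hjm : 2*c+1-j ≤ m := by by_contra h; exact hc2 (Nat.choose_eq_zero_of_lt (by omega))
      rcases Nat.lt_or_ge j c with hcase | hcase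
      · rw [show 2*(j+2) - (2*c+3) = 0 from by omega, show 2*(j+1) - (2*c+3) = 0 from by omega,
          show 2*j - (2*c+3) = 0 from by omega, show 2*j - (2*c+1) = 0 from by omega]
        simp
      · have hjc2 : c+2 ≤ j := by omega
        have hm2 : (2*c+1-j)+1 ≤ m := by omega
        rcases Nat.lt_or_ge z (j+1) with hz1 | hz1
        · -- z = j
          obtain rfl : z = j := by omega
          rw [show z - z = 0 from by omega, show z - (z+1) = 0 from by omega]
          zify [hjm, hm2, show z ≤ 2*c+1 from by omega, show 2*c+3 ≤ 2*(z+2) from by omega,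
            show 2*c+3 ≤ 2*(z+1) from by omega, show 2*c+3 ≤ 2*z from by omega,
            show 2*c+1 ≤ 2*z from by omega, show 2*c+2 ≤ z+m from by omega,
            show 2*c+1 ≤ z+m from by omega]
          have key : (0:ℤ) ≤ ((m:ℤ)+z-2*c-2) * ((m:ℤ)+z-2*c-1) := by
            have h1 : (0:ℤ) ≤ (m:ℤ)+z-2*c-2 := by omega
            have h2 : (0:ℤ) ≤ (m:ℤ)+z-2*c-1 := by omega
            exact mul_nonneg h1 h2
          nlinarith [key]
        · zify [hjz, hz1, hjm, hm2, show j ≤ 2*c+1 from by omega,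
            show 2*c+3 ≤ 2*(j+2) from by omega, show 2*c+3 ≤ 2*(j+1) from by omega,
            show 2*c+3 ≤ 2*j from by omega, show 2*c+1 ≤ 2*j from by omega,
            show 2*c+2 ≤ z+m from by omega, show 2*c+1 ≤ z+m from by omega]
          have key : (0:ℤ) ≤ (((m:ℤ) - (2*c+1-(j:ℤ))) - ((z:ℤ)-j))
              * ((((z:ℤ)-j) + ((m:ℤ)-(2*c+1-(j:ℤ)))) - 1) := by
            have h1 : (0:ℤ) ≤ (((m:ℤ) - (2*c+1-(j:ℤ))) - ((z:ℤ)-j)) := by omega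
            have h2 : (0:ℤ) ≤ ((((z:ℤ)-j) + ((m:ℤ)-(2*c+1-(j:ℤ)))) - 1) := by omega
            exact mul_nonneg h1 h2
          nlinarith [key]
  · -- the exceptional pair j = c, j = c+1
    simp only [show 2*c+1-c = c+1 from by omega, show 2*c+1-(c+1) = c from by omega,
      show 2*(c+2)-(2*c+3) = 1 from by omega, show 2*(c+1)-(2*c+3) = 0 from by omega,
      show 2*c-(2*c+3) = 0 from by omega, show 2*c-(2*c+1) = 0 from by omega,
      show 2*(c+1+2)-(2*c+3) = 3 from by omega, show 2*(c+1+1)-(2*c+3) = 1 from by omega,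
      show 2*(c+1)-(2*c+1) = 1 from by omega,
      Nat.mul_zero, Nat.zero_mul, mul_zero, zero_mul, add_zero, zero_add, mul_one]
    have e6 : z.choose (c+1) * (c+1) = z.choose c * (z-c) := Nat.choose_succ_right_eq z c
    have e7 : m.choose (c+1) * (c+1) = m.choose c * (m-c) := Nat.choose_succ_right_eq m c
    have key0 : z.choose c * m.choose (c+1) * ((z-c)*(z-(c+1)))
        = z.choose (c+1) * m.choose c * ((m-c)*(z-(c+1))) := by
      calc z.choose c * m.choose (c+1) * ((z-c)*(z-(c+1)))
          = (z.choose c * (z-c)) * (m.choose (c+1) * (z-(c+1))) := by ring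
        _ = (z.choose (c+1) * (c+1)) * (m.choose (c+1) * (z-(c+1))) := by rw [e6]
        _ = (m.choose (c+1) * (c+1)) * (z.choose (c+1) * (z-(c+1))) := by ring
        _ = (m.choose c * (m-c)) * (z.choose (c+1) * (z-(c+1))) := by rw [e7]
        _ = z.choose (c+1) * m.choose c * ((m-c)*(z-(c+1))) := by ring
    rw [key0]
    have lhs_eq : z.choose (c+1) * m.choose c * ((m-c)*(z-(c+1)))
        + (z.choose (c+1) * m.choose c * ((z-(c+1))*(z-(c+1+1))*3)
          + z.choose (c+1) * m.choose c * (2*(z-(c+1))*(m-c)))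
        = (z.choose (c+1) * m.choose c)
          * ((m-c)*(z-(c+1)) + (z-(c+1))*(z-(c+1+1))*3 + 2*(z-(c+1))*(m-c)) := by ring
    have rhs_eq : (z+m-(2*c+2)) * ((z+m-(2*c+1)) * (z.choose (c+1) * m.choose c))
        = (z.choose (c+1) * m.choose c) * ((z+m-(2*c+2)) * (z+m-(2*c+1))) := by ring
    rw [lhs_eq, rhs_eq]
    rcases Nat.eq_zero_or_pos (z.choose (c+1) * m.choose c) with h0 | hpos
    · rw [h0]; simp
    · apply Nat.mul_le_mul_left
      have hc1 : z.choose (c+1) ≠ 0 := by intro h; rw [h] at hpos; simp at hpos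
      have hc2 : m.choose c ≠ 0 := by intro h; rw [h] at hpos; simp at hpos
      have hcz : c+1 ≤ z := by by_contra h; exact hc1 (Nat.choose_eq_zero_of_lt (by omega))
      have hcm : c ≤ m := by by_contra h; exact hc2 (Nat.choose_eq_zero_of_lt (by omega))
      rcases Nat.lt_or_ge z (c+2) with hz1 | hz1
      · rw [show z - (c+1) = 0 from by omega]
        simp
      · zify [hcz, hcm, show c+1+1 ≤ z from hz1, show 2*c+2 ≤ z+m from by omega,
          show 2*c+1 ≤ z+m from by omega]
        have key : (0:ℤ) ≤ ((m:ℤ)+c+2-2*z) * ((z:ℤ)+m-2*c-2) := by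
          have h1 : (0:ℤ) ≤ (m:ℤ)+c+2-2*z := by omega
          have h2 : (0:ℤ) ≤ (z:ℤ)+m-2*c-2 := by omega
          exact mul_nonneg h1 h2
        nlinarith [key]

lemma even_step (z m L : ℕ) (hzm : z ≤ m) (hLn : L ≤ z + m) (c : ℕ) (hL : L = 2*c+2) :
    L * Tsum z m L ≤ (z + m + 1 - L) * Tsum z m (L - 1) := by
  subst hL
  unfold Tsum
  rw [Finset.mul_sum, Finset.mul_sum]
  -- Left side: split coefficient L = i + (L - i)
  have split : ∀ i ∈ Finset.range (2*c+2+1),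
      (2*c+2) * (z.choose i * m.choose (2*c+2-i) * (2*i - (2*c+2)))
      = i * (z.choose i * m.choose (2*c+2-i) * (2*i - (2*c+2)))
        + (2*c+2-i) * (z.choose i * m.choose (2*c+2-i) * (2*i - (2*c+2))) := by
    intro i hi
    simp only [Finset.mem_range] at hi
    rw [← Nat.add_mul, show i + (2*c+2-i) = 2*c+2 from by omega]
  rw [Finset.sum_congr rfl split, Finset.sum_add_distrib]
  -- first sum: shift index
  have s1 : ∑ i ∈ Finset.range (2*c+2+1),
      i * (z.choose i * m.choose (2*c+2-i) * (2*i - (2*c+2)))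
      = ∑ j ∈ Finset.range (2*c+2),
        (z - j) * (z.choose j * m.choose (2*c+1-j) * (2*(j+1) - (2*c+2))) := by
    rw [Finset.sum_range_succ']
    simp only [zero_mul, add_zero]
    refine Finset.sum_congr rfl (fun j hj => ?_)
    simp only [Finset.mem_range] at hj
    rw [show 2*c+2-(j+1) = 2*c+1-j from by omega]
    calc (j+1) * (z.choose (j+1) * m.choose (2*c+1-j) * (2*(j+1) - (2*c+2)))
        = (z.choose (j+1) * (j+1)) * (m.choose (2*c+1-j) * (2*(j+1) - (2*c+2))) := by ring
      _ = (z.choose j * (z-j)) * (m.choose (2*c+1-j) * (2*(j+1) - (2*c+2))) := by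
          rw [Nat.choose_succ_right_eq]
      _ = (z - j) * (z.choose j * m.choose (2*c+1-j) * (2*(j+1) - (2*c+2))) := by ring
  -- second sum: peel last term
  have s2 : ∑ i ∈ Finset.range (2*c+2+1),
      (2*c+2-i) * (z.choose i * m.choose (2*c+2-i) * (2*i - (2*c+2)))
      = ∑ j ∈ Finset.range (2*c+2),
        (m - (2*c+1-j)) * (z.choose j * m.choose (2*c+1-j) * (2*j - (2*c+2))) := by
    rw [Finset.sum_range_succ]
    rw [show 2*c+2-(2*c+2) = 0 from by omega]
    simp only [zero_mul, add_zero]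
    refine Finset.sum_congr rfl (fun j hj => ?_)
    simp only [Finset.mem_range] at hj
    have key : m.choose ((2*c+1-j)+1) * ((2*c+1-j)+1) = m.choose (2*c+1-j) * (m - (2*c+1-j)) :=
      Nat.choose_succ_right_eq m (2*c+1-j)
    rw [show (2*c+1-j)+1 = 2*c+2-j from by omega] at key
    calc (2*c+2-j) * (z.choose j * m.choose (2*c+2-j) * (2*j - (2*c+2)))
        = (m.choose (2*c+2-j) * (2*c+2-j)) * (z.choose j * (2*j - (2*c+2))) := by ring
      _ = (m.choose (2*c+1-j) * (m - (2*c+1-j))) * (z.choose j * (2*j - (2*c+2))) := by rw [key]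
      _ = (m - (2*c+1-j)) * (z.choose j * m.choose (2*c+1-j) * (2*j - (2*c+2))) := by ring
  rw [s1, s2, ← Finset.sum_add_distrib]
  rw [show 2*c+2-1 = 2*c+1 from by omega]
  rw [show (2*c+1)+1 = 2*c+2 from by omega]
  refine Finset.sum_le_sum (fun j hj => ?_)
  simp only [Finset.mem_range] at hj
  -- restructure as common factor
  set C1 := z.choose j with hC1
  set C2 := m.choose (2*c+1-j) with hC2
  have lhs_eq : (z - j) * (C1 * C2 * (2*(j+1) - (2*c+2)))
      + (m - (2*c+1-j)) * (C1 * C2 * (2*j - (2*c+2)))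
      = (C1*C2) * ((z-j) * (2*(j+1) - (2*c+2)) + (m - (2*c+1-j)) * (2*j - (2*c+2))) := by ring
  have rhs_eq : (z + m + 1 - (2*c+2)) * (C1 * C2 * (2*j - (2*c+1)))
      = (C1*C2) * ((z + m + 1 - (2*c+2)) * (2*j - (2*c+1))) := by ring
  rw [lhs_eq, rhs_eq]
  rcases Nat.eq_zero_or_pos (C1*C2) with h0 | hpos
  · rw [h0]; simp
  · apply Nat.mul_le_mul_left
    have hc1 : C1 ≠ 0 := by intro h; rw [h] at hpos; simp at hpos
    have hc2 : C2 ≠ 0 := by intro h; rw [h] at hpos; simp at hpos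
    have hjz : j ≤ z := by
      by_contra h
      exact hc1 (Nat.choose_eq_zero_of_lt (by omega))
    have hjm : 2*c+1-j ≤ m := by
      by_contra h
      exact hc2 (Nat.choose_eq_zero_of_lt (by omega))
    rcases Nat.lt_or_ge j (c+1) with hcase | hcase
    · rw [show 2*(j+1) - (2*c+2) = 0 from by omega, show 2*j - (2*c+2) = 0 from by omega,
        show 2*j - (2*c+1) = 0 from by omega]
      simp
    · have key : z - j ≤ m - (2*c+1-j) := by omega
      zify [hjz, hjm, show j ≤ 2*c+1 from by omega, show 2*c+2 ≤ 2*(j+1) from by omega,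
        show 2*c+2 ≤ 2*j from by omega, show 2*c+1 ≤ 2*j from by omega,
        show 2*c+2 ≤ z+m+1 from by omega] at key ⊢
      nlinarith [key]

lemma T_one (z m : ℕ) : Tsum z m 1 = z := by
  simp [Tsum, Finset.sum_range_succ]

lemma main_bound (z m n : ℕ) (hn : z + m = n) (hzm : 2*z ≤ m) :
    ∀ L, 1 ≤ L → L ≤ n → n * Tsum z m L ≤ z * n.choose L := by
  intro L
  induction L using Nat.strong_induction_on with
  | _ L ih =>
    intro hL1 hLn
    rcases Nat.lt_or_ge L 2 with h2 | h2
    · have hL : L = 1 := by omega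
      subst hL
      rw [T_one, Nat.choose_one_right, mul_comm]
    · rcases Nat.even_or_odd L with he | ho
      · obtain ⟨c, hc⟩ : ∃ c, L = 2*c+2 := by
          obtain ⟨k, hk⟩ := he; exact ⟨k-1, by omega⟩
        have hstep := even_step z m L (by omega) (by omega) c hc
        have ihm := ih (L-1) (by omega) (by omega) (by omega)
        have chain : L * (n * Tsum z m L) ≤ L * (z * n.choose L) := by
          calc L * (n * Tsum z m L) = n * (L * Tsum z m L) := by ring
            _ ≤ n * ((z+m+1-L) * Tsum z m (L-1)) := Nat.mul_le_mul_left n hstep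
            _ = (z+m+1-L) * (n * Tsum z m (L-1)) := by ring
            _ ≤ (z+m+1-L) * (z * n.choose (L-1)) := Nat.mul_le_mul_left _ ihm
            _ = z * (n.choose (L-1) * (n - (L-1))) := by
                rw [show z+m+1-L = n-(L-1) from by omega]; ring
            _ = z * (n.choose ((L-1)+1) * ((L-1)+1)) := by rw [Nat.choose_succ_right_eq]
            _ = L * (z * n.choose L) := by rw [show (L-1)+1 = L from by omega]; ring
        exact Nat.le_of_mul_le_mul_left chain (by omega)
      · obtain ⟨c, hc⟩ : ∃ c, L = 2*c+3 := by
          obtain ⟨k, hk⟩ := ho; exact ⟨k-1, by omega⟩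
        have hstep := odd_step z m L hzm (by omega) c hc
        have ihm := ih (L-2) (by omega) (by omega) (by omega)
        have chain : (L*(L-1)) * (n * Tsum z m L) ≤ (L*(L-1)) * (z * n.choose L) := by
          calc (L*(L-1)) * (n * Tsum z m L) = n * (L * ((L-1) * Tsum z m L)) := by ring
            _ ≤ n * ((z+m+1-L) * ((z+m+2-L) * Tsum z m (L-2))) := Nat.mul_le_mul_left n hstep
            _ = (z+m+1-L) * ((z+m+2-L) * (n * Tsum z m (L-2))) := by ring
            _ ≤ (z+m+1-L) * ((z+m+2-L) * (z * n.choose (L-2))) := by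
                exact Nat.mul_le_mul_left _ (Nat.mul_le_mul_left _ ihm)
            _ = z * ((n-(L-1)) * (n.choose (L-2) * (n - (L-2)))) := by
                rw [show z+m+1-L = n-(L-1) from by omega,
                  show z+m+2-L = n-(L-2) from by omega]; ring
            _ = z * ((n-(L-1)) * (n.choose ((L-2)+1) * ((L-2)+1))) := by
                rw [Nat.choose_succ_right_eq]
            _ = z * ((L-1) * (n.choose (L-1) * (n - (L-1)))) := by
                rw [show (L-2)+1 = L-1 from by omega]; ring
            _ = z * ((L-1) * (n.choose ((L-1)+1) * ((L-1)+1))) := by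
                rw [Nat.choose_succ_right_eq]
            _ = (L*(L-1)) * (z * n.choose L) := by rw [show (L-1)+1 = L from by omega]; ring
        exact Nat.le_of_mul_le_mul_left chain (Nat.mul_pos (by omega) (by omega))

theorem stmt18 (n m ℓ : ℕ) (hn : 1 ≤ n) (hm : m ≤ n) (h23 : 2 * n ≤ 3 * m)
    (h2 : 2 ≤ ℓ) (hℓ : ℓ ≤ n) :
    ∑ i ∈ Finset.Icc ((ℓ + 1) / 2) ℓ,
        ((n - m).choose i : ℝ) * (m.choose (ℓ - i) : ℝ) * ((2 * i - ℓ : ℕ) : ℝ)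
          / (n.choose ℓ : ℝ)
      ≤ ((n - m : ℕ) : ℝ) / (n : ℝ) := by
  have hn0 : (0:ℝ) < (n:ℝ) := by exact_mod_cast hn
  have hC : (0:ℝ) < (n.choose ℓ : ℝ) := by exact_mod_cast Nat.choose_pos hℓ
  rw [← Finset.sum_div, div_le_div_iff₀ hC hn0]
  have hsum : (∑ i ∈ Finset.Icc ((ℓ + 1) / 2) ℓ,
      ((n - m).choose i : ℝ) * (m.choose (ℓ - i) : ℝ) * ((2 * i - ℓ : ℕ) : ℝ))
      = ((Tsum (n-m) m ℓ : ℕ) : ℝ) := by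
    have hcast : ((Tsum (n-m) m ℓ : ℕ) : ℝ)
        = ∑ i ∈ Finset.range (ℓ+1),
          ((n - m).choose i : ℝ) * (m.choose (ℓ - i) : ℝ) * ((2 * i - ℓ : ℕ) : ℝ) := by
      rw [Tsum]; push_cast; ring
    rw [hcast]
    apply Finset.sum_subset
    · intro x hx
      simp only [Finset.mem_Icc] at hx
      simp only [Finset.mem_range]
      omega
    · intro x hx hnx
      simp only [Finset.mem_range] at hx
      simp only [Finset.mem_Icc] at hnx
      rw [show 2*x - ℓ = 0 from by omega]
      simp
  rw [hsum]
  have h := main_bound (n-m) m n (by omega) (by omega) ℓ (by omega) hℓ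
  rw [mul_comm] at h
  exact_mod_cast h
end
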